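/- arXiv:1505.04693 — 2 statements merged into one kernel-verified Lean document; each statement's English description precedes it below -/
import Mathlib

section
/- Let M ≥ 1 be an integer and k ≥ 1 an integer. Let C_1, …, C_k ≥ 0, T_1, …, T_k > 0 and D_k > 0 be real numbers, let U_i = C_i/T_i, and let Δ_k = max{U_k, C_k/D_k}. Suppose the index set {1, …, k−1} is partitioned into pairwise disjoint sets S_1, …, S_M (with union {1,…,k−1}), and the set {1, …, M} is partitioned into two disjoint sets M1 and M2 such that: for every m ∈ M1, C_k + D_k·(Σ_{i∈S_m} U_i) + Σ_{i∈S_m} C_i − Σ_{i∈S_m} U_i·C_i > D_k, and for every m ∈ M2, U_k + Σ_{i∈S_m} U_i > 1. Then (3 − 1/M) · max{ Δ_k, (Σ_{i=1}^{k} U_i)/M, (Σ_{i=1}^{k} C_i)/(M·D_k) } > 1. -/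
/-!
Each processor fails one of the two tests, and either failure gives
`1 < Δ_k + Σ_{S_m} U + (Σ_{S_m} C) / D_k` (for the response-time test because
`Σ U_i C_i ≥ 0`). Summing over the `M` processors and using
`Δ_k ≤ U_k + C_k / D_k` yields `M < (M - 1) Δ_k + Σ_{i ≤ k} U_i + (Σ_{i ≤ k} C_i) / D_k`,
and each of the three terms is at most `M` times the maximum `X`, hence `M < (3M - 1) X`.
-/

open Finset

lemma one_lt_div_add_sum_add_sum_div {ι : Type*} (s : Finset ι) (U C : ι → ℝ) {c D : ℝ}
    (hU : ∀ i ∈ s, 0 ≤ U i) (hC : ∀ i ∈ s, 0 ≤ C i) (hD : 0 < D)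
    (h : c + D * ∑ i ∈ s, U i + ∑ i ∈ s, C i - ∑ i ∈ s, U i * C i > D) :
    1 < c / D + ∑ i ∈ s, U i + (∑ i ∈ s, C i) / D := by
  have hUC : 0 ≤ ∑ i ∈ s, U i * C i := sum_nonneg fun i hi => mul_nonneg (hU i hi) (hC i hi)
  rw [div_add' _ _ _ hD.ne', ← add_div, one_lt_div hD]
  linarith

lemma one_lt_three_sub_inv_mul_max {M Δ u c D : ℝ} (hM : 1 ≤ M)
    (h : M < (M - 1) * Δ + u + c / D) :
    1 < (3 - 1 / M) * max Δ (max (u / M) (c / (M * D))) := by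
  set X := max Δ (max (u / M) (c / (M * D)))
  have hM0 : 0 < M := by linarith
  have hΔ : Δ ≤ X := le_max_left _ _
  have hu : u ≤ M * X := by
    rw [← div_le_iff₀' hM0]
    exact (le_max_left _ _).trans (le_max_right _ _)
  have hc : c / D ≤ M * X := by
    rw [← div_le_iff₀' hM0, div_div, mul_comm D]
    exact (le_max_right _ _).trans (le_max_right _ _)
  have hMX : M < (3 * M - 1) * X := by nlinarith
  rw [show (3 - 1 / M) * X = (3 * M - 1) * X / M by field_simp, one_lt_div hM0]
  exact hMX

theorem stmt_1_general
    (M k : ℕ) (hM : 1 ≤ M) (hk : 1 ≤ k)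
    (C T : ℕ → ℝ) (Dk : ℝ)
    (hC : ∀ i ∈ Finset.Icc 1 k, 0 ≤ C i)
    (hT : ∀ i ∈ Finset.Icc 1 k, 0 < T i)
    (hDk : 0 < Dk)
    (U : ℕ → ℝ) (hU : ∀ i, U i = C i / T i)
    (Δk : ℝ) (hΔk : Δk = max (U k) (C k / Dk))
    (S : ℕ → Finset ℕ)
    (hSdisj : ∀ m ∈ Finset.Icc 1 M, ∀ m' ∈ Finset.Icc 1 M, m ≠ m' → Disjoint (S m) (S m'))
    (hSunion : (Finset.Icc 1 M).biUnion S = Finset.Icc 1 (k - 1))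
    (M1 M2 : Finset ℕ)
    (hMunion : M1 ∪ M2 = Finset.Icc 1 M)
    (h1 : ∀ m ∈ M1,
      C k + Dk * (∑ i ∈ S m, U i) + (∑ i ∈ S m, C i) - (∑ i ∈ S m, U i * C i) > Dk)
    (h2 : ∀ m ∈ M2, U k + ∑ i ∈ S m, U i > 1) :
    (3 - 1 / (M : ℝ)) *
      max Δk (max ((∑ i ∈ Finset.Icc 1 k, U i) / M)
        ((∑ i ∈ Finset.Icc 1 k, C i) / (M * Dk))) > 1 := by
  obtain ⟨n, rfl⟩ := Nat.exists_eq_add_of_le' hk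
  rw [Nat.add_sub_cancel] at hSunion
  have hU0 : ∀ i ∈ Icc 1 (n + 1), 0 ≤ U i := fun i hi =>
    hU i ▸ div_nonneg (hC i hi) (hT i hi).le
  have hlast : n + 1 ∈ Icc 1 (n + 1) := right_mem_Icc.mpr hk
  have hS : ∀ m ∈ Icc 1 M, S m ⊆ Icc 1 (n + 1) := fun m hm =>
    (subset_biUnion_of_mem S hm).trans (hSunion ▸ Icc_subset_Icc_right n.le_succ)
  have hproc : ∀ m ∈ Icc 1 M, 1 < Δk + ∑ i ∈ S m, U i + (∑ i ∈ S m, C i) / Dk := by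
    intro m hm
    have hCm : 0 ≤ (∑ i ∈ S m, C i) / Dk :=
      div_nonneg (sum_nonneg fun i hi => hC i (hS m hm hi)) hDk.le
    rcases mem_union.mp (hMunion ▸ hm) with hm1 | hm2
    · have := one_lt_div_add_sum_add_sum_div (S m) U C (fun i hi => hU0 i (hS m hm hi))
        (fun i hi => hC i (hS m hm hi)) hDk (h1 m hm1)
      linarith [hΔk ▸ le_max_right (U (n + 1)) (C (n + 1) / Dk)]
    · linarith [h2 m hm2, hΔk ▸ le_max_left (U (n + 1)) (C (n + 1) / Dk)]
  have hsum : (M : ℝ) < M * Δk + ∑ i ∈ Icc 1 n, U i + (∑ i ∈ Icc 1 n, C i) / Dk := by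
    have := sum_lt_sum_of_nonempty ⟨1, left_mem_Icc.mpr hM⟩ hproc
    rwa [sum_add_distrib, sum_add_distrib, ← sum_div, ← sum_biUnion hSdisj,
      ← sum_biUnion hSdisj, hSunion, sum_const, sum_const, Nat.card_Icc, Nat.add_sub_cancel,
      nsmul_eq_mul, nsmul_eq_mul, mul_one] at this
  have hΔle : Δk ≤ U (n + 1) + C (n + 1) / Dk :=
    hΔk ▸ max_le_add_of_nonneg (hU0 _ hlast) (div_nonneg (hC _ hlast) hDk.le)
  refine one_lt_three_sub_inv_mul_max (by exact_mod_cast hM) ?_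
  rw [sum_Icc_succ_top (by omega), sum_Icc_succ_top (by omega), add_div]
  linarith

/-- Arithmetic core of Corollary 1 (speedup factor `3 - 1/M` of
deadline-monotonic partitioning for arbitrary-deadline sporadic tasks
under the response-time bound of Bini et al.). -/
theorem stmt_1
    (M k : ℕ) (hM : 1 ≤ M) (hk : 1 ≤ k)
    (C T : ℕ → ℝ) (Dk : ℝ)
    (hC : ∀ i ∈ Finset.Icc 1 k, 0 ≤ C i)
    (hT : ∀ i ∈ Finset.Icc 1 k, 0 < T i)
    (hDk : 0 < Dk)
    (U : ℕ → ℝ) (hU : ∀ i, U i = C i / T i)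
    (Δk : ℝ) (hΔk : Δk = max (U k) (C k / Dk))
    (S : ℕ → Finset ℕ)
    (hSdisj : ∀ m ∈ Finset.Icc 1 M, ∀ m' ∈ Finset.Icc 1 M, m ≠ m' → Disjoint (S m) (S m'))
    (hSunion : (Finset.Icc 1 M).biUnion S = Finset.Icc 1 (k - 1))
    (M1 M2 : Finset ℕ)
    (hMdisj : Disjoint M1 M2)
    (hMunion : M1 ∪ M2 = Finset.Icc 1 M)
    (h1 : ∀ m ∈ M1,
      C k + Dk * (∑ i ∈ S m, U i) + (∑ i ∈ S m, C i) - (∑ i ∈ S m, U i * C i) > Dk)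
    (h2 : ∀ m ∈ M2, U k + ∑ i ∈ S m, U i > 1) :
    (3 - 1 / (M : ℝ)) *
      max Δk (max ((∑ i ∈ Finset.Icc 1 k, U i) / M)
        ((∑ i ∈ Finset.Icc 1 k, C i) / (M * Dk))) > 1 :=
  stmt_1_general M k hM hk C T Dk hC hT hDk U hU Δk hΔk S hSdisj hSunion M1 M2 hMunion h1 h2
end

section
/- Let M ≥ 1 and k ≥ 1 be integers. Let C_1, …, C_k > 0, T_1, …, T_{k−1} > 0 and D_k > 0 be reals, and put U_i = C_i/T_i. Let T*1 = { i < k : T_i < D_k } and T*2 = { i < k : T_i ≥ D_k }, and let C_k' = C_k + (Σ_{i∈T*2} C_i)/M. If ∏_{i∈T*1} (1 + U_i/M) ≤ 2/(1 + C_k'/D_k), then there exists a real t with 0 < t ≤ D_k such that C_k + (Σ_{i=1}^{k−1} ⌈t/T_i⌉·C_i)/M ≤ t. -/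
/-!
Suppose the test fails at every `t ∈ (0, D]`. A task with `T_i ≥ D` releases exactly one job in
`(0, t]`, which is how it enters `C_k'`. For a task with `T_i < D` put `u_i = U_i / M` and let
`s_i = ⌊D / T_i⌋ T_i` be its last release no later than `D`; write `σ = ∑ u_i s_i`. Failure at
`t = s_i` gives `s_i < C_k' + σ + ∑_{s_j < s_i} u_j s_j`, so, taking the tasks in increasing order
of `s_i`, the running total `C_k' + σ + ∑_{s_j ≤ s_i} u_j s_j` grows by a factor of at most `1 + u_i`
at each task, whence `C_k' + 2σ ≤ (C_k' + σ) ∏ (1 + u_i)`. Failure at `t = D` gives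
`D < C_k' + 2σ`, and together these contradict `∏ (1 + u_i) ≤ 2 / (1 + C_k' / D)`.
-/

open Finset

theorem add_sum_le_mul_prod_one_add {ι α : Type*} [DecidableEq ι] [LinearOrder α]
    (f : ι → α) (a u : ι → ℝ) (B : ℝ) (S : Finset ι)
    (ha : ∀ i ∈ S, 0 ≤ a i) (hu : ∀ i ∈ S, 0 ≤ u i)
    (hstep : ∀ i ∈ S, a i ≤ u i * (B + ∑ j ∈ S with f j < f i, a j)) :
    B + ∑ i ∈ S, a i ≤ B * ∏ i ∈ S, (1 + u i) := by
  induction S using Finset.induction_on_max_value f with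
  | empty => simp
  | insert m S hmS hmax ih =>
    have hS : B + ∑ i ∈ S, a i ≤ B * ∏ i ∈ S, (1 + u i) := by
      refine ih (fun i hi => ha i (mem_insert_of_mem hi)) (fun i hi => hu i (mem_insert_of_mem hi))
        fun i hi => ?_
      have hfilter : {j ∈ insert m S | f j < f i} = {j ∈ S | f j < f i} := by
        rw [filter_insert, if_neg (hmax i hi).not_gt]
      rw [← hfilter]
      exact hstep i (mem_insert_of_mem hi)
    have hum := hu m (mem_insert_self m S)
    have hm : a m ≤ u m * (B + ∑ i ∈ S, a i) := by
      refine (hstep m (mem_insert_self m S)).trans (mul_le_mul_of_nonneg_left ?_ hum)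
      gcongr
      · exact fun j hj _ => ha j (mem_insert_of_mem hj)
      intro j hj
      obtain ⟨hjm, hlt⟩ := mem_filter.mp hj
      rcases mem_insert.mp hjm with rfl | hjS
      · exact absurd hlt (lt_irrefl _)
      · exact hjS
    rw [sum_insert hmS, prod_insert hmS]
    nlinarith

noncomputable def lastRelease (D T : ℝ) : ℝ := ⌊D / T⌋ * T

section lastRelease

variable {D T t : ℝ}

theorem le_lastRelease (hT : 0 < T) (hTD : T ≤ D) : T ≤ lastRelease D T := by
  have : (1 : ℝ) ≤ ⌊D / T⌋ := by
    exact_mod_cast Int.le_floor.mpr (by simpa [one_le_div hT] using hTD)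
  simpa [lastRelease] using mul_le_mul_of_nonneg_right this hT.le

theorem lastRelease_le (hT : 0 < T) : lastRelease D T ≤ D :=
  calc lastRelease D T ≤ D / T * T := mul_le_mul_of_nonneg_right (Int.floor_le _) hT.le
    _ = D := div_mul_cancel₀ D hT.ne'

theorem ceil_div_mul_le_lastRelease (hT : 0 < T) (ht : t ≤ lastRelease D T) :
    ⌈t / T⌉ * T ≤ lastRelease D T := by
  have : ⌈t / T⌉ ≤ ⌊D / T⌋ := Int.ceil_le.mpr (by rwa [div_le_iff₀ hT])
  exact mul_le_mul_of_nonneg_right (by exact_mod_cast this) hT.le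

theorem ceil_div_mul_le_lastRelease_add (hT : 0 < T) (ht : t ≤ D) :
    ⌈t / T⌉ * T ≤ lastRelease D T + T := by
  have : ⌈t / T⌉ ≤ ⌊D / T⌋ + 1 :=
    (Int.ceil_mono (div_le_div_of_nonneg_right ht hT.le)).trans (Int.ceil_le_floor_add_one _)
  calc (⌈t / T⌉ : ℝ) * T ≤ (⌊D / T⌋ + 1) * T :=
        mul_le_mul_of_nonneg_right (by exact_mod_cast this) hT.le
    _ = lastRelease D T + T := by rw [lastRelease]; ring

theorem ceil_div_mul_le_lastRelease_add_ite (hT : 0 < T) (hTD : T ≤ D) (ht : t ≤ D) :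
    ⌈t / T⌉ * T ≤ lastRelease D T + if lastRelease D T < t then lastRelease D T else 0 := by
  split_ifs with h
  · linarith [ceil_div_mul_le_lastRelease_add (D := D) hT ht, le_lastRelease hT hTD]
  · simpa using ceil_div_mul_le_lastRelease hT (not_lt.mp h)

end lastRelease

theorem ceil_div_eq_one {t T : ℝ} (ht : 0 < t) (htT : t ≤ T) : ⌈t / T⌉ = 1 := by
  have hT : 0 < T := ht.trans_le htT
  rw [Int.ceil_eq_iff]
  constructor
  · norm_num; positivity
  · simpa [div_le_one hT] using htT

theorem exists_add_sum_ceil_le_of_prod_le {ι : Type*} [DecidableEq ι] (S : Finset ι)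
    (u T : ι → ℝ) {c D : ℝ} (hc : 0 < c) (hD : 0 < D) (hu : ∀ i ∈ S, 0 ≤ u i)
    (hT : ∀ i ∈ S, 0 < T i) (hTD : ∀ i ∈ S, T i ≤ D)
    (hprod : ∏ i ∈ S, (1 + u i) ≤ 2 / (1 + c / D)) :
    ∃ t, 0 < t ∧ t ≤ D ∧ c + ∑ i ∈ S, u i * (⌈t / T i⌉ * T i) ≤ t := by
  by_contra! hfail
  set s := fun i => lastRelease D (T i)
  set σ := ∑ i ∈ S, u i * s i
  set P := ∏ i ∈ S, (1 + u i)
  have hs_pos : ∀ i ∈ S, 0 < s i := fun i hi =>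
    (hT i hi).trans_le (le_lastRelease (hT i hi) (hTD i hi))
  have hus_nonneg : ∀ i ∈ S, 0 ≤ u i * s i := fun i hi => mul_nonneg (hu i hi) (hs_pos i hi).le
  have hdemand : ∀ t ≤ D,
      ∑ i ∈ S, u i * (⌈t / T i⌉ * T i) ≤ σ + ∑ i ∈ S with s i < t, u i * s i := by
    intro t ht
    rw [sum_filter, ← sum_add_distrib]
    refine sum_le_sum fun i hi => ?_
    calc u i * (⌈t / T i⌉ * T i) ≤ u i * (s i + if s i < t then s i else 0) :=
          mul_le_mul_of_nonneg_left
            (ceil_div_mul_le_lastRelease_add_ite (hT i hi) (hTD i hi) ht) (hu i hi)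
      _ = u i * s i + if s i < t then u i * s i else 0 := by split_ifs <;> ring
  have hgrowth : c + σ + σ ≤ (c + σ) * P := by
    refine add_sum_le_mul_prod_one_add s (fun i => u i * s i) u (c + σ) S hus_nonneg hu
      fun i hi => mul_le_mul_of_nonneg_left ?_ (hu i hi)
    have hsD : s i ≤ D := lastRelease_le (hT i hi)
    linarith [hfail (s i) (hs_pos i hi) hsD, hdemand (s i) hsD]
  have hD_lt : D < c + 2 * σ := by
    have : ∑ i ∈ S with s i < D, u i * s i ≤ σ :=
      sum_le_sum_of_subset_of_nonneg (filter_subset _ S) fun i hi _ => hus_nonneg i hi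
    linarith [hfail D hD le_rfl, hdemand D le_rfl]
  have hP_le : P * (D + c) ≤ 2 * D := by
    rw [le_div_iff₀ (by positivity)] at hprod
    calc P * (D + c) = P * (1 + c / D) * D := by field_simp
      _ ≤ 2 * D := mul_le_mul_of_nonneg_right hprod hD.le
  have hσ_nonneg : 0 ≤ σ := sum_nonneg hus_nonneg
  -- `(c + 2σ)(D + c) = 2D(c + σ) + c(c + 2σ - D) > 2D(c + σ)`
  nlinarith [mul_le_mul_of_nonneg_right hgrowth (by linarith : 0 ≤ D + c),
    mul_lt_mul_of_pos_left hD_lt hc, mul_le_mul_of_nonneg_left hP_le (by linarith : 0 ≤ c + σ)]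

theorem sum_ceil_div_mul_eq {ι : Type*} (S : Finset ι) (C T : ι → ℝ) {t D : ℝ}
    (ht : 0 < t) (htD : t ≤ D) :
    ∑ i ∈ S, ⌈t / T i⌉ * C i =
      ∑ i ∈ S with T i < D, ⌈t / T i⌉ * C i + ∑ i ∈ S with D ≤ T i, C i := by
  rw [← sum_filter_add_sum_filter_not S (fun i => T i < D)]
  simp only [not_lt]
  congr 1
  refine sum_congr rfl fun i hi => ?_
  rw [ceil_div_eq_one ht (htD.trans (mem_filter.mp hi).2), Int.cast_one, one_mul]

theorem stmt_5_general
    (M k : ℕ) (hk : 1 ≤ k)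
    (C T : ℕ → ℝ) (Dk : ℝ)
    (hC : ∀ i ∈ Finset.Icc 1 k, 0 < C i)
    (hT : ∀ i ∈ Finset.Icc 1 (k - 1), 0 < T i)
    (hDk : 0 < Dk)
    (U : ℕ → ℝ) (hU : ∀ i, U i = C i / T i)
    (T1 T2 : Finset ℕ)
    (hT1 : T1 = (Finset.Icc 1 (k - 1)).filter (fun i => T i < Dk))
    (hT2 : T2 = (Finset.Icc 1 (k - 1)).filter (fun i => Dk ≤ T i))
    (Ck' : ℝ) (hCk' : Ck' = C k + (∑ i ∈ T2, C i) / M)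
    (hhyp : (∏ i ∈ T1, (1 + U i / M)) ≤ 2 / (1 + Ck' / Dk)) :
    ∃ t : ℝ, 0 < t ∧ t ≤ Dk ∧
      C k + (∑ i ∈ Finset.Icc 1 (k - 1), (⌈t / T i⌉ : ℝ) * C i) / M ≤ t := by
  subst hT1 hT2 hCk'
  have hC_nonneg : ∀ i ∈ Icc 1 (k - 1), 0 ≤ C i := fun i hi =>
    (hC i (Icc_subset_Icc_right (Nat.sub_le k 1) hi)).le
  have hc : 0 < C k + (∑ i ∈ Icc 1 (k - 1) with Dk ≤ T i, C i) / M := by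
    have : 0 ≤ ∑ i ∈ Icc 1 (k - 1) with Dk ≤ T i, C i :=
      sum_nonneg fun i hi => hC_nonneg i (mem_filter.mp hi).1
    have := hC k (mem_Icc.mpr ⟨hk, le_rfl⟩)
    positivity
  have hu : ∀ i ∈ {i ∈ Icc 1 (k - 1) | T i < Dk}, 0 ≤ U i / M := fun i hi => by
    have := hC_nonneg i (mem_filter.mp hi).1
    have := hT i (mem_filter.mp hi).1
    rw [hU]
    positivity
  obtain ⟨t, ht, htD, hdemand⟩ := exists_add_sum_ceil_le_of_prod_le _ (fun i => U i / M) T hc hDk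
    hu (fun i hi => hT i (mem_filter.mp hi).1) (fun i hi => (mem_filter.mp hi).2.le) hhyp
  refine ⟨t, ht, htD, ?_⟩
  have hlight : ∑ i ∈ Icc 1 (k - 1) with T i < Dk, (U i / M) * (⌈t / T i⌉ * T i) =
      (∑ i ∈ Icc 1 (k - 1) with T i < Dk, ⌈t / T i⌉ * C i) / M := by
    rw [sum_div]
    refine sum_congr rfl fun i hi => ?_
    have := (hT i (mem_filter.mp hi).1).ne'
    rw [hU]
    field_simp
  rw [sum_ceil_div_mul_eq _ C T ht htD, add_div]
  linarith

/-- Theorem 4 of the paper: the hyperbolic-bound condition guarantees that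
task `τ_k` passes the averaged time-demand-analysis test at some point
`t ∈ (0, D_k]`. -/
theorem stmt_5
    (M k : ℕ) (hM : 1 ≤ M) (hk : 1 ≤ k)
    (C T : ℕ → ℝ) (Dk : ℝ)
    (hC : ∀ i ∈ Finset.Icc 1 k, 0 < C i)
    (hT : ∀ i ∈ Finset.Icc 1 (k - 1), 0 < T i)
    (hDk : 0 < Dk)
    (U : ℕ → ℝ) (hU : ∀ i, U i = C i / T i)
    (T1 T2 : Finset ℕ)
    (hT1 : T1 = (Finset.Icc 1 (k - 1)).filter (fun i => T i < Dk))
    (hT2 : T2 = (Finset.Icc 1 (k - 1)).filter (fun i => Dk ≤ T i))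
    (Ck' : ℝ) (hCk' : Ck' = C k + (∑ i ∈ T2, C i) / M)
    (hhyp : (∏ i ∈ T1, (1 + U i / M)) ≤ 2 / (1 + Ck' / Dk)) :
    ∃ t : ℝ, 0 < t ∧ t ≤ Dk ∧
      C k + (∑ i ∈ Finset.Icc 1 (k - 1), (⌈t / T i⌉ : ℝ) * C i) / M ≤ t :=
  stmt_5_general M k hk C T Dk hC hT hDk U hU T1 T2 hT1 hT2 Ck' hCk' hhyp
end
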